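/- arXiv:2504.02631 — 2 statements merged into one kernel-verified Lean document; each statement's English description precedes it below -/
import Mathlib

section
/- Suppose the sequence g^t = (β^t, z^t, u^t), with z^t ∈ Z_r for all t, satisfies the PPA variational inequality with a symmetric positive definite matrix H, and assume a saddle point exists. Then the sequence {g^t} converges to a point g^∞ = (β^∞, z^∞, u^∞) which is itself a saddle point. -/
open Matrix Filter

noncomputable section

/-- Vectors in ℝ^p. -/
abbrev Vec (p : ℕ) := Fin p → ℝ

/-- Triples `g = (β, z, u) ∈ ℝ^p × ℝ^p × ℝ^p`. -/
abbrev Trip (p : ℕ) := Vec p × Vec p × Vec p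

/-- Index type for ℝ^{3p}. -/
abbrev Idx3 (p : ℕ) := Fin p ⊕ Fin p ⊕ Fin p

/-- Identify a triple `(β, z, u)` with a vector in ℝ^{3p}. -/
def toSum {p : ℕ} (g : Trip p) : Idx3 p → ℝ := Sum.elim g.1 (Sum.elim g.2.1 g.2.2)

/-- The operator `F(β, z, u) = (−Aᵀu, u, Aβ − z − c)`. -/
def Fop {p : ℕ} (A : Matrix (Fin p) (Fin p) ℝ) (c : Vec p) (g : Trip p) : Trip p :=
  (-(Aᵀ *ᵥ g.2.2), g.2.2, A *ᵥ g.1 - g.2.1 - c)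

/-- Membership in the box `Z_r = {z : ‖z‖_∞ ≤ r}`. -/
def inZ {p : ℕ} (r : ℝ) (z : Vec p) : Prop := ∀ j, |z j| ≤ r

/-- The ℓ₁ norm on ℝ^p. -/
def l1 {p : ℕ} (β : Vec p) : ℝ := ∑ j, |β j|

/-- The Euclidean inner product on ℝ^{3p}. -/
def ip {p : ℕ} (v w : Trip p) : ℝ := toSum v ⬝ᵥ toSum w

/-- The bilinear form `⟨v, H w⟩` on ℝ^{3p}; in particular `ipH H v v = ‖v‖_H²`. -/
def ipH {p : ℕ} (H : Matrix (Idx3 p) (Idx3 p) ℝ) (v w : Trip p) : ℝ :=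
  toSum v ⬝ᵥ (H *ᵥ toSum w)

/-- `g* = (β*, z*, u*)` is a saddle point: `z* ∈ Z_r` and
`‖β‖₁ − ‖β*‖₁ + ⟨g − g*, F(g*)⟩ ≥ 0` for all `g = (β, z, u)` with `z ∈ Z_r`. -/
def IsSaddle {p : ℕ} (A : Matrix (Fin p) (Fin p) ℝ) (c : Vec p) (r : ℝ)
    (gs : Trip p) : Prop :=
  inZ r gs.2.1 ∧ ∀ g : Trip p, inZ r g.2.1 →
    0 ≤ l1 g.1 - l1 gs.1 + ip (g - gs) (Fop A c gs)

/-- The sequence `g^t` satisfies the PPA variational inequality with matrix `H`: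
for every `t` and every `g = (β, z, u)` with `z ∈ Z_r`,
`‖β‖₁ − ‖β^{t+1}‖₁ + ⟨g − g^{t+1}, F(g^{t+1})⟩ ≥ ⟨g − g^{t+1}, H(g^t − g^{t+1})⟩`. -/
def SatisfiesPVI {p : ℕ} (A : Matrix (Fin p) (Fin p) ℝ) (c : Vec p) (r : ℝ)
    (H : Matrix (Idx3 p) (Idx3 p) ℝ) (g : ℕ → Trip p) : Prop :=
  ∀ t : ℕ, ∀ gg : Trip p, inZ r gg.2.1 →
    ipH H (gg - g (t + 1)) (g t - g (t + 1)) ≤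
      l1 gg.1 - l1 (g (t + 1)).1 + ip (gg - g (t + 1)) (Fop A c (g (t + 1)))


/-!
Write `⟪v, w⟫_H = ⟨v, H w⟩`. Testing the PPA inequality at a saddle point `g*` and the saddle
inequality at `g^{t+1}`, the `F`-terms cancel because `F` is affine with skew-symmetric linear
part, leaving `⟪g^{t+1} - g*, g^t - g^{t+1}⟫_H ≥ 0`, i.e.
`‖g^{t+1} - g*‖_H² + ‖g^t - g^{t+1}‖_H² ≤ ‖g^t - g*‖_H²`. So the iterates are bounded, Fejér
monotone with respect to every saddle point, and their steps tend to `0`. Along a convergent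
subsequence both `g^t` and `g^{t+1}` converge to the same limit, and passing to the limit in the
PPA inequality shows that this limit is a saddle point; Fejér monotonicity with respect to it then
turns subsequential convergence into convergence.
-/

open Topology

theorem exists_mem_tendsto_of_antitone_dist {X : Type*} [PseudoMetricSpace X] [ProperSpace X]
    {x : ℕ → X} {S : Set X} (hS : S.Nonempty)
    (hdist : ∀ s ∈ S, Antitone fun t => dist (x t) s)
    (hlim : ∀ y (φ : ℕ → ℕ), StrictMono φ → Tendsto (x ∘ φ) atTop (𝓝 y) → y ∈ S) :
    ∃ y ∈ S, Tendsto x atTop (𝓝 y) := by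
  obtain ⟨s, hs⟩ := hS
  have hball : ∀ t, x t ∈ Metric.closedBall s (dist (x 0) s) :=
    fun t => hdist s hs (Nat.zero_le t)
  obtain ⟨y, -, φ, hφ, hxφ⟩ := tendsto_subseq_of_bounded Metric.isBounded_closedBall hball
  have hy := hlim y φ hφ hxφ
  refine ⟨y, hy, Metric.tendsto_atTop.2 fun ε hε => ?_⟩
  obtain ⟨k, hk⟩ := Metric.tendsto_atTop.1 hxφ ε hε
  exact ⟨φ k, fun t ht => (hdist y hy ht).trans_lt (hk k le_rfl)⟩

theorem summable_of_add_le_of_nonneg {a b : ℕ → ℝ} (ha : ∀ t, 0 ≤ a t) (hb : ∀ t, 0 ≤ b t)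
    (h : ∀ t, a (t + 1) + b t ≤ a t) : Summable b := by
  have hsum : ∀ n, ∑ t ∈ Finset.range n, b t + a n ≤ a 0 := by
    intro n
    induction n with
    | zero => simp
    | succ n ih => rw [Finset.sum_range_succ]; linarith [h n]
  exact summable_of_sum_range_le hb fun n => by linarith [hsum n, ha n]

theorem tendsto_sub_succ_of_norm_sq_le {E : Type*} [SeminormedAddCommGroup E] {x : ℕ → E}
    {s : E}
    (h : ∀ t, ‖x (t + 1) - s‖ ^ 2 + ‖x t - x (t + 1)‖ ^ 2 ≤ ‖x t - s‖ ^ 2) :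
    Tendsto (fun t => x t - x (t + 1)) atTop (𝓝 0) := by
  have hsq : Tendsto (fun t => ‖x t - x (t + 1)‖ ^ 2) atTop (𝓝 0) :=
    (summable_of_add_le_of_nonneg (a := fun t => ‖x t - s‖ ^ 2) (fun _ => by positivity)
      (fun _ => by positivity) h).tendsto_atTop_zero
  refine tendsto_zero_iff_norm_tendsto_zero.2 ?_
  simpa [Real.sqrt_sq (norm_nonneg _)] using hsq.sqrt

section InnerProductSpace

open scoped RealInnerProductSpace

variable {E : Type*} [NormedAddCommGroup E] [InnerProductSpace ℝ E]

theorem norm_sub_sq_add_norm_sub_sq_le {x x' s : E} (h : 0 ≤ ⟪x' - s, x - x'⟫) :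
    ‖x' - s‖ ^ 2 + ‖x - x'‖ ^ 2 ≤ ‖x - s‖ ^ 2 := by
  have hsplit : x - s = (x' - s) + (x - x') := by abel
  rw [hsplit, norm_add_sq_real]
  linarith

theorem exists_mem_tendsto_of_inner_sub_succ_nonneg [ProperSpace E] {x : ℕ → E} {S : Set E}
    (hS : S.Nonempty) (hstep : ∀ s ∈ S, ∀ t, 0 ≤ ⟪x (t + 1) - s, x t - x (t + 1)⟫)
    (hlim : ∀ y (φ : ℕ → ℕ), StrictMono φ → Tendsto (x ∘ φ) atTop (𝓝 y) →
      Tendsto (fun k => x (φ k + 1)) atTop (𝓝 y) → y ∈ S) :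
    ∃ y ∈ S, Tendsto x atTop (𝓝 y) := by
  have hfejer : ∀ s ∈ S, ∀ t, ‖x (t + 1) - s‖ ^ 2 + ‖x t - x (t + 1)‖ ^ 2 ≤ ‖x t - s‖ ^ 2 :=
    fun s hs t => norm_sub_sq_add_norm_sub_sq_le (hstep s hs t)
  obtain ⟨s, hs⟩ := hS
  have hsteps := tendsto_sub_succ_of_norm_sq_le (hfejer s hs)
  refine exists_mem_tendsto_of_antitone_dist ⟨s, hs⟩
    (fun s hs => antitone_nat_of_succ_le fun t => ?_) fun y φ hφ hxφ => hlim y φ hφ hxφ ?_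
  · rw [dist_eq_norm, dist_eq_norm, ← pow_le_pow_iff_left₀ (norm_nonneg _) (norm_nonneg _)
      two_ne_zero]
    nlinarith [hfejer s hs t]
  · simpa using hxφ.sub (hsteps.comp hφ.tendsto_atTop)

end InnerProductSpace

def MatrixInnerSpace {n : Type*} [Fintype n] (M : Matrix n n ℝ) (_hM : M.PosDef) : Type _ :=
  n → ℝ

namespace MatrixInnerSpace

variable {n : Type*} [Fintype n] {M : Matrix n n ℝ} {hM : M.PosDef}

instance : NormedAddCommGroup (MatrixInnerSpace M hM) := M.toNormedAddCommGroup hM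

instance : InnerProductSpace ℝ (MatrixInnerSpace M hM) := M.toInnerProductSpace hM.posSemidef

instance : FiniteDimensional ℝ (MatrixInnerSpace M hM) :=
  inferInstanceAs (FiniteDimensional ℝ (n → ℝ))

end MatrixInnerSpace

section Saddle

variable {p : ℕ}

theorem continuous_toSum : Continuous (toSum : Trip p → Idx3 p → ℝ) :=
  continuous_pi fun i => by
    rcases i with i | i | i <;> simp only [toSum, Sum.elim_inl, Sum.elim_inr] <;> fun_prop

def tripEquiv (H : Matrix (Idx3 p) (Idx3 p) ℝ) (hH : H.PosDef) :
    Trip p ≃L[ℝ] MatrixInnerSpace H hH :=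
  LinearEquiv.toContinuousLinearEquiv
    { toFun := toSum
      invFun := fun y => (fun i => y (.inl i), fun i => y (.inr (.inl i)),
        fun i => y (.inr (.inr i)))
      map_add' := fun a b => by funext i; rcases i with i | i | i <;> rfl
      map_smul' := fun a b => by funext i; rcases i with i | i | i <;> rfl
      left_inv := fun _ => rfl
      right_inv := fun y => by funext i; rcases i with i | i | i <;> rfl }

theorem inner_tripEquiv {H : Matrix (Idx3 p) (Idx3 p) ℝ} {hH : H.PosDef} (v w : Trip p) :
    inner ℝ (tripEquiv H hH v) (tripEquiv H hH w) = ipH H v w := by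
  change (H *ᵥ toSum w) ⬝ᵥ star (toSum v) = _
  simp [ipH, dotProduct_comm]

theorem ip_eq_add_dotProduct (v w : Trip p) :
    ip v w = v.1 ⬝ᵥ w.1 + v.2.1 ⬝ᵥ w.2.1 + v.2.2 ⬝ᵥ w.2.2 := by
  simp [ip, toSum, dotProduct, Fintype.sum_sum_type, add_assoc]

variable (A : Matrix (Fin p) (Fin p) ℝ) (c : Vec p) {r : ℝ}

theorem ip_sub_Fop_add_ip_sub_Fop (v w : Trip p) :
    ip (v - w) (Fop A c w) + ip (w - v) (Fop A c v) = 0 := by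
  have hA : ∀ x y : Vec p, y ⬝ᵥ (A *ᵥ x) = x ⬝ᵥ (Aᵀ *ᵥ y) := fun x y => by
    rw [dotProduct_mulVec x Aᵀ y, vecMul_transpose, dotProduct_comm]
  obtain ⟨v1, v2, v3⟩ := v
  obtain ⟨w1, w2, w3⟩ := w
  simp only [ip_eq_add_dotProduct, Fop, Prod.mk_sub_mk, sub_dotProduct, dotProduct_sub,
    dotProduct_neg, hA, mulVec_sub]
  rw [dotProduct_comm v3 v2, dotProduct_comm v3 w2, dotProduct_comm w3 v2,
    dotProduct_comm w3 w2, dotProduct_comm v3 c, dotProduct_comm w3 c]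
  ring

theorem continuous_l1_sub_l1_add_ip_sub_Fop (gg : Trip p) :
    Continuous fun a : Trip p => l1 gg.1 - l1 a.1 + ip (gg - a) (Fop A c a) := by
  simp only [ip, l1, Fop]
  have := continuous_toSum (p := p)
  fun_prop

theorem continuous_ipH (H : Matrix (Idx3 p) (Idx3 p) ℝ) :
    Continuous fun q : Trip p × Trip p => ipH H q.1 q.2 := by
  simp only [ipH]
  have := continuous_toSum (p := p)
  fun_prop

variable {A c}

theorem IsSaddle.ipH_sub_le_zero {H : Matrix (Idx3 p) (Idx3 p) ℝ} {g : ℕ → Trip p}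
    {gs : Trip p} (hgs : IsSaddle A c r gs) (hz : ∀ t, inZ r (g t).2.1)
    (hPVI : SatisfiesPVI A c r H g) (t : ℕ) :
    ipH H (gs - g (t + 1)) (g t - g (t + 1)) ≤ 0 := by
  linarith [hPVI t gs hgs.1, hgs.2 (g (t + 1)) (hz (t + 1)),
    ip_sub_Fop_add_ip_sub_Fop A c gs (g (t + 1))]

theorem SatisfiesPVI.isSaddle_of_tendsto {H : Matrix (Idx3 p) (Idx3 p) ℝ} {g : ℕ → Trip p}
    (hPVI : SatisfiesPVI A c r H g) (hz : ∀ t, inZ r (g t).2.1) {y : Trip p} {φ : ℕ → ℕ}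
    (hy : Tendsto (g ∘ φ) atTop (𝓝 y)) (hy' : Tendsto (fun k => g (φ k + 1)) atTop (𝓝 y)) :
    IsSaddle A c r y := by
  have hZ : IsClosed {a : Trip p | inZ r a.2.1} := by
    simp only [inZ, Set.ofPred_forall]
    exact isClosed_iInter fun j => isClosed_le (by fun_prop) continuous_const
  refine ⟨hZ.mem_of_tendsto hy (Eventually.of_forall fun k => hz (φ k)), fun gg hgg => ?_⟩
  have hsteps : Tendsto (fun k => (gg - g (φ k + 1), g (φ k) - g (φ k + 1))) atTop
      (𝓝 (gg - y, 0)) := by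
    simpa using (tendsto_const_nhds.sub hy').prodMk_nhds (hy.sub hy')
  have hle := le_of_tendsto_of_tendsto' ((continuous_ipH H).tendsto _ |>.comp hsteps)
    ((continuous_l1_sub_l1_add_ip_sub_Fop A c gg).tendsto y |>.comp hy')
    fun k => hPVI (φ k) gg hgg
  simpa [ipH, toSum] using hle

end Saddle

theorem stmt12_general {p : ℕ} (A : Matrix (Fin p) (Fin p) ℝ) (c : Vec p) (r : ℝ)
    (H : Matrix (Idx3 p) (Idx3 p) ℝ) (hH : H.PosDef)
    (g : ℕ → Trip p) (hz : ∀ t, inZ r (g t).2.1)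
    (hPVI : SatisfiesPVI A c r H g)
    (hex : ∃ gs : Trip p, IsSaddle A c r gs) :
    ∃ ginf : Trip p, IsSaddle A c r ginf ∧ Tendsto g atTop (nhds ginf) := by
  let e := tripEquiv H hH
  have he : ∀ {x : ℕ → Trip p} {y : Trip p},
      Tendsto (e ∘ x) atTop (𝓝 (e y)) → Tendsto x atTop (𝓝 y) :=
    e.toHomeomorph.isInducing.tendsto_nhds_iff.2
  obtain ⟨_, ⟨ginf, hginf, rfl⟩, hconv⟩ :=
    exists_mem_tendsto_of_inner_sub_succ_nonneg (x := e ∘ g)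
      (S := e '' {gs | IsSaddle A c r gs}) (Set.Nonempty.image e hex)
      (by
        rintro _ ⟨gs, hgs, rfl⟩ t
        have h := hgs.ipH_sub_le_zero hz hPVI t
        rw [← inner_tripEquiv, map_sub, map_sub, ← neg_sub, inner_neg_left] at h
        simpa using h)
      (fun y φ _ hy hy' => ⟨e.symm y, hPVI.isSaddle_of_tendsto hz (φ := φ)
        (he (by simpa [Function.comp_def])) (he (by simpa [Function.comp_def])),
        e.apply_symm_apply y⟩)
  exact ⟨ginf, hginf, he hconv⟩

/-- Global convergence: if `g^t` (with `z^t ∈ Z_r`) satisfies the PPA variational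
inequality with symmetric positive definite `H` and a saddle point exists, then `g^t`
converges to some `g^∞` which is itself a saddle point. -/
theorem stmt12 {p : ℕ} (A : Matrix (Fin p) (Fin p) ℝ) (c : Vec p) (r : ℝ) (hr : 0 ≤ r)
    (H : Matrix (Idx3 p) (Idx3 p) ℝ) (hH : H.PosDef)
    (g : ℕ → Trip p) (hz : ∀ t, inZ r (g t).2.1)
    (hPVI : SatisfiesPVI A c r H g)
    (hex : ∃ gs : Trip p, IsSaddle A c r gs) :
    ∃ ginf : Trip p, IsSaddle A c r ginf ∧ Tendsto g atTop (nhds ginf) :=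
  stmt12_general A c r H hH g hz hPVI hex
end
end

section
/- Suppose the sequence g^t = (β^t, z^t, u^t), with z^t ∈ Z_r for all t, satisfies the PPA variational inequality with a symmetric positive definite matrix H, and let g* be any saddle point. Then for every integer T ≥ 0, ‖g^T − g^{T+1}‖_H² ≤ (1/(T+1)) · ‖g^0 − g*‖_H². -/
open Matrix Filter

noncomputable section

lemma toSum_sub {p : ℕ} (a b : Trip p) : toSum (a - b) = toSum a - toSum b := by
  funext i
  rcases i with j | j | j <;> rfl

lemma toSum_neg {p : ℕ} (a : Trip p) : toSum (-a) = - toSum a := by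
  funext i
  rcases i with j | j | j <;> rfl

lemma ip_eq {p : ℕ} (v w : Trip p) :
    ip v w = v.1 ⬝ᵥ w.1 + v.2.1 ⬝ᵥ w.2.1 + v.2.2 ⬝ᵥ w.2.2 := by
  simp [ip, toSum, dotProduct, Fintype.sum_sum_type, add_assoc]

lemma dp_t {p : ℕ} (A : Matrix (Fin p) (Fin p) ℝ) (x y : Vec p) :
    x ⬝ᵥ (Aᵀ *ᵥ y) = y ⬝ᵥ (A *ᵥ x) := by
  rw [dotProduct_mulVec, vecMul_transpose, dotProduct_comm]

lemma ip_skew {p : ℕ} (A : Matrix (Fin p) (Fin p) ℝ) (c : Vec p) (a b : Trip p) :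
    ip (a - b) (Fop A c a) = ip (a - b) (Fop A c b) := by
  simp only [ip_eq, Fop, Prod.fst_sub, Prod.snd_sub, Pi.sub_apply]
  simp only [dotProduct_neg, dotProduct_sub, sub_dotProduct, dp_t, mulVec_sub]
  linarith [dotProduct_comm a.2.1 a.2.2, dotProduct_comm b.2.1 a.2.2,
    dotProduct_comm b.2.2 a.2.1, dotProduct_comm a.2.1 b.2.2,
    dotProduct_comm b.2.1 b.2.2, dotProduct_comm b.2.2 b.2.1]

lemma ip_neg_left {p : ℕ} (v w : Trip p) : ip (-v) w = - ip v w := by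
  simp [ip, toSum_neg]

lemma ipH_neg_left {p : ℕ} (H : Matrix (Idx3 p) (Idx3 p) ℝ) (v w : Trip p) :
    ipH H (-v) w = - ipH H v w := by
  simp [ipH, toSum_neg]

lemma ipH_symm {p : ℕ} {H : Matrix (Idx3 p) (Idx3 p) ℝ} (hH : H.PosDef) (v w : Trip p) :
    ipH H v w = ipH H w v := by
  unfold ipH
  rw [dotProduct_mulVec, dotProduct_comm, ← mulVec_transpose,
    ← conjTranspose_eq_transpose_of_trivial, hH.isHermitian.eq]

lemma ipH_nonneg {p : ℕ} {H : Matrix (Idx3 p) (Idx3 p) ℝ} (hH : H.PosDef) (v : Trip p) :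
    0 ≤ ipH H v v := hH.posSemidef.re_dotProduct_nonneg (toSum v)

lemma ipH_expand {p : ℕ} {H : Matrix (Idx3 p) (Idx3 p) ℝ} (hH : H.PosDef) (x y : Trip p) :
    ipH H x x = ipH H (x - y) (x - y) + 2 * ipH H y (x - y) + ipH H y y := by
  have hs : toSum y ⬝ᵥ (H *ᵥ toSum x) = toSum x ⬝ᵥ (H *ᵥ toSum y) := ipH_symm hH y x
  simp only [ipH, toSum_sub, dotProduct_sub, sub_dotProduct, mulVec_sub, hs]
  ring

lemma ipH_sub_right {p : ℕ} (H : Matrix (Idx3 p) (Idx3 p) ℝ) (v x y : Trip p) :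
    ipH H v (x - y) = ipH H v x - ipH H v y := by
  simp [ipH, toSum_sub, mulVec_sub, dotProduct_sub]

/-- Worst-case O(1/T) rate: for every integer `T ≥ 0`,
`‖g^T − g^{T+1}‖_H² ≤ (1/(T+1)) ‖g^0 − g*‖_H²`. -/
theorem stmt14 {p : ℕ} (A : Matrix (Fin p) (Fin p) ℝ) (c : Vec p) (r : ℝ) (hr : 0 ≤ r)
    (H : Matrix (Idx3 p) (Idx3 p) ℝ) (hH : H.PosDef)
    (g : ℕ → Trip p) (hz : ∀ t, inZ r (g t).2.1)
    (hPVI : SatisfiesPVI A c r H g)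
    (gs : Trip p) (hgs : IsSaddle A c r gs) :
    ∀ T : ℕ, ipH H (g T - g (T + 1)) (g T - g (T + 1)) ≤
      (1 / (T + 1 : ℝ)) * ipH H (g 0 - gs) (g 0 - gs) := by
  -- Step A: contraction towards the saddle point
  have stepA : ∀ t, ipH H (g (t+1) - gs) (g (t+1) - gs)
      + ipH H (g t - g (t+1)) (g t - g (t+1)) ≤ ipH H (g t - gs) (g t - gs) := by
    intro t
    have h1 := hPVI t gs hgs.1
    have h2 := hgs.2 (g (t+1)) (hz (t+1))
    have hskew : ip (gs - g (t+1)) (Fop A c (g (t+1)))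
        = - ip (g (t+1) - gs) (Fop A c gs) := by
      rw [← ip_skew A c gs (g (t+1)), ← neg_sub, ip_neg_left]
    rw [hskew] at h1
    have hB : ipH H (gs - g (t+1)) (g t - g (t+1)) ≤ 0 := by linarith
    have hcross : ipH H (g (t+1) - gs) (g t - g (t+1))
        = - ipH H (gs - g (t+1)) (g t - g (t+1)) := by
      rw [← ipH_neg_left, neg_sub]
    have hexp := ipH_expand hH (g t - gs) (g (t+1) - gs)
    rw [sub_sub_sub_cancel_right] at hexp
    rw [hcross] at hexp
    linarith
  -- Step B: monotone decrease of the successive differences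
  have stepB : ∀ t, ipH H (g (t+1) - g (t+2)) (g (t+1) - g (t+2))
      ≤ ipH H (g t - g (t+1)) (g t - g (t+1)) := by
    intro t
    have h1 := hPVI t (g (t+2)) (hz (t+2))
    have h2 := hPVI (t+1) (g (t+1)) (hz (t+1))
    simp only [show t+1+1 = t+2 from rfl] at h2
    have hskew : ip (g (t+2) - g (t+1)) (Fop A c (g (t+2)))
        = ip (g (t+2) - g (t+1)) (Fop A c (g (t+1))) := ip_skew A c (g (t+2)) (g (t+1))
    have hskew2 : ip (g (t+1) - g (t+2)) (Fop A c (g (t+2)))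
        = - ip (g (t+2) - g (t+1)) (Fop A c (g (t+2))) := by
      rw [← ip_neg_left, neg_sub]
    rw [hskew2, hskew] at h2
    have hL1 : ipH H (g (t+2) - g (t+1)) (g t - g (t+1))
        = - ipH H (g (t+1) - g (t+2)) (g t - g (t+1)) := by
      rw [← ipH_neg_left, neg_sub]
    rw [hL1] at h1
    -- from h1 + h2 :  Q(d(t+1)) ≤ ipH H d(t+1) (d t)
    have hkey : ipH H (g (t+1) - g (t+2)) (g (t+1) - g (t+2))
        ≤ ipH H (g (t+1) - g (t+2)) (g t - g (t+1)) := by linarith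
    have hexp := ipH_expand hH (g t - g (t+1)) (g (t+1) - g (t+2))
    have hlin := ipH_sub_right H (g (t+1) - g (t+2)) (g t - g (t+1)) (g (t+1) - g (t+2))
    have hnn := ipH_nonneg hH ((g t - g (t+1)) - (g (t+1) - g (t+2)))
    linarith
  -- monotonicity over all indices
  have mono : ∀ s t : ℕ, s ≤ t → ipH H (g t - g (t+1)) (g t - g (t+1))
      ≤ ipH H (g s - g (s+1)) (g s - g (s+1)) := by
    intro s t hst
    induction t with
    | zero => simp_all
    | succ n ih =>
      rcases Nat.lt_or_ge s (n+1) with h | h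
      · have := stepB n
        have := ih (Nat.lt_succ_iff.mp h)
        simp only [show n+1+1 = n+2 from rfl]
        linarith
      · have : s = n+1 := le_antisymm hst h
        subst this
        exact le_refl _
  -- telescoping sum
  have hsum : ∀ T : ℕ, (∑ t ∈ Finset.range (T+1), ipH H (g t - g (t+1)) (g t - g (t+1)))
      + ipH H (g (T+1) - gs) (g (T+1) - gs) ≤ ipH H (g 0 - gs) (g 0 - gs) := by
    intro T
    induction T with
    | zero => simpa [Finset.sum_range_one, add_comm] using stepA 0
    | succ n ih =>
      rw [Finset.sum_range_succ]
      have := stepA (n+1)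
      simp only [show n+1+1 = n+2 from rfl] at *
      linarith
  intro T
  have hpos : (0:ℝ) < (T:ℝ) + 1 := by positivity
  have hcard : ((T:ℝ)+1) * ipH H (g T - g (T+1)) (g T - g (T+1))
      ≤ ∑ t ∈ Finset.range (T+1), ipH H (g t - g (t+1)) (g t - g (t+1)) := by
    have h := Finset.card_nsmul_le_sum (Finset.range (T+1))
      (fun t => ipH H (g t - g (t+1)) (g t - g (t+1)))
      (ipH H (g T - g (T+1)) (g T - g (T+1)))
      (fun i hi => mono i T (Nat.lt_succ_iff.mp (Finset.mem_range.mp hi)))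
    simpa [Finset.card_range, nsmul_eq_mul, add_comm, mul_comm] using h
  have h2 := hsum T
  have h3 := ipH_nonneg hH (g (T+1) - gs)
  rw [one_div, inv_mul_eq_div, le_div_iff₀ hpos]
  nlinarith
end
end
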